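/- arXiv:0906.3284 — 2 statements merged into one kernel-verified Lean document; each statement's English description precedes it below -/
import Mathlib

section
/- For the elementary cellular automaton rule 178 with global map G, a pattern 01 (or 10) acts as an information barrier: if c, c' : ℤ → {0,1} are configurations with c_p = c'_p for all p ≤ j+1 and (c_j, c_{j+1}) ∈ {(0,1),(1,0)}, then for every n ≥ 0: (i) (G^n(c)_j, G^n(c)_{j+1}) ∈ {(0,1),(1,0)}, and (ii) G^n(c)_p = G^n(c')_p for all p ≤ j. -/
/-- The local rule of elementary cellular automaton 178. -/
def rule178 : Bool → Bool → Bool → Bool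
  | true,  true,  true  => true
  | true,  true,  false => false
  | true,  false, true  => true
  | true,  false, false => true
  | false, true,  true  => false
  | false, true,  false => false
  | false, false, true  => true
  | false, false, false => false

/-- The global map of rule 178 on bi-infinite configurations. -/
def G178 (c : ℤ → Bool) : ℤ → Bool := fun z => rule178 (c (z - 1)) (c z) (c (z + 1))

lemma G178_wall_left (c : ℤ → Bool) (j : ℤ) (h : c j = !c (j + 1)) :
    G178 c j = c (j + 1) := by
  simp only [G178]
  rcases Bool.eq_false_or_eq_true (c j) with hb | hb <;>
    rcases Bool.eq_false_or_eq_true (c (j - 1)) with ha | ha <;>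
      simp [hb, ha] at h ⊢ <;> simp [h, rule178]

lemma G178_wall_right (c : ℤ → Bool) (j : ℤ) (h : c j = !c (j + 1)) :
    G178 c (j + 1) = c j := by
  simp only [G178, show j + 1 - 1 = j from by ring]
  rcases Bool.eq_false_or_eq_true (c (j + 1)) with hb | hb <;>
    rcases Bool.eq_false_or_eq_true (c (j + 1 + 1)) with ha | ha <;>
      simp [hb, ha] at h ⊢ <;> simp [h, rule178]

lemma rule178_aux (c c' : ℤ → Bool) (j : ℤ)
    (hagree : ∀ p ≤ j + 1, c p = c' p)
    (hwall : c j = !c (j + 1)) :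
    ∀ n : ℕ, (G178^[n] c j = !(G178^[n] c (j + 1))) ∧
      (∀ p ≤ j + 1, G178^[n] c p = G178^[n] c' p) := by
  intro n
  induction n with
  | zero => exact ⟨hwall, hagree⟩
  | succ n ih =>
    obtain ⟨hw, ha⟩ := ih
    set d := G178^[n] c with hd
    set d' := G178^[n] c' with hd'
    have hw' : d' j = !d' (j + 1) := by
      rw [← ha j (by omega), ← ha (j + 1) le_rfl]; exact hw
    simp only [Function.iterate_succ_apply', ← hd, ← hd']
    constructor
    · rw [G178_wall_left d j hw, G178_wall_right d j hw, hw]; simp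
    · intro p hp
      rcases lt_or_eq_of_le hp with hp | hp
      · simp only [G178]
        rw [ha (p - 1) (by omega), ha p (by omega), ha (p + 1) (by omega)]
      · subst hp
        rw [G178_wall_right d j hw, G178_wall_right d' j hw', ha j (by omega)]

/-- For rule 178, a pattern 01 (or 10) acts as an information barrier: if `c` and `c'`
agree on all positions `p ≤ j+1` and `(c j, c (j+1))` is 01 or 10, then for every
`n ≥ 0`, `(Gⁿ c) j, (Gⁿ c) (j+1)` is again 01 or 10, and `Gⁿ c` and `Gⁿ c'` agree on
all positions `p ≤ j`. -/
theorem rule178_information_barrier (c c' : ℤ → Bool) (j : ℤ)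
    (hagree : ∀ p ≤ j + 1, c p = c' p)
    (hwall : (c j = false ∧ c (j + 1) = true) ∨ (c j = true ∧ c (j + 1) = false)) :
    ∀ n : ℕ,
      ((G178^[n] c j = false ∧ G178^[n] c (j + 1) = true) ∨
        (G178^[n] c j = true ∧ G178^[n] c (j + 1) = false)) ∧
      (∀ p ≤ j, G178^[n] c p = G178^[n] c' p) := by
  have hw : c j = !c (j + 1) := by rcases hwall with ⟨h1, h2⟩ | ⟨h1, h2⟩ <;> simp [h1, h2]
  intro n
  obtain ⟨h1, h2⟩ := rule178_aux c c' j hagree hw n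
  refine ⟨?_, fun p hp => h2 p (by omega)⟩
  rcases Bool.eq_false_or_eq_true (G178^[n] c (j + 1)) with hb | hb <;>
    simp [hb] at h1 ⊢ <;> simp [h1]
end

section
/- For rule 178, the value of the n-th iterated local rule depends on Bob's input y ∈ {0,1}^{n+1} only through the first bit of y and the length of the longest constant prefix of y. Precisely, for y ∈ {0,1}^{n+1} let ℓ(y) be the largest ℓ ≥ 1 with y_1 = y_2 = … = y_ℓ. If y, ỹ ∈ {0,1}^{n+1} satisfy y_1 = ỹ_1 and ℓ(y) = ℓ(ỹ), then f^n(x·y) = f^n(x·ỹ) for every x ∈ {0,1}^n. Consequently, the matrix M^n of rule 178 has at most 2(n+1) distinct columns. -/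
/-- One synchronous step of rule 178 on a finite word (sliding window of width 3);
the result is shorter by two cells. -/
def step178 : List Bool → List Bool
  | a :: b :: c :: l => rule178 a b c :: step178 (b :: c :: l)
  | _ => []

/-- The `n`-th iterated local rule of rule 178: on a word of length `2n+1` it
returns the single remaining cell after `n` steps. -/
def iter178 (n : ℕ) (z : List Bool) : Bool := (step178^[n] z).headD false

/-- Length of the longest constant prefix of a word. -/
def constPrefix : List Bool → ℕ
  | [] => 0
  | [_] => 1
  | a :: b :: l => if a = b then constPrefix (b :: l) + 1 else 1

/-!
Rule 178 flips a cell unless the cell and both its neighbours agree, so a cell that differs from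
a neighbour takes that neighbour's value. Write `y = bˡ c …` with `c ≠ b`. For any letter `a`, one
step turns `a :: y` into a word whose leading run and following letter depend only on `a`, `b`,
`ℓ` and the length of `y`: for `ℓ ≥ 2` it is `f(a, b, b)` followed by one step of `b :: bˡ⁻¹ c …`,
and for `ℓ = 1` it starts with `c b`. One step of `x₀ a · y` is `step (x₀ a b) · step (a :: y)`, so by
induction on `n` the value `fⁿ(x · y)` depends on `y` only through `(y₁, ℓ(y))`, a pair that takes
at most `2 (n + 1)` values.
-/

theorem rule178_of_ne_left {a b : Bool} (c : Bool) (h : a ≠ b) : rule178 a b c = a := by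
  revert h; cases a <;> cases b <;> cases c <;> decide

theorem rule178_of_ne_right (a : Bool) {b c : Bool} (h : b ≠ c) : rule178 a b c = c := by
  revert h; cases a <;> cases b <;> cases c <;> decide

theorem step178_length : ∀ l : List Bool, (step178 l).length = l.length - 2
  | [] | [_] | [_, _] => rfl
  | _ :: b :: c :: l => by simp [step178, step178_length (b :: c :: l)]

theorem step178_append (b c : Bool) (v : List Bool) : ∀ u : List Bool,
    step178 (u ++ b :: c :: v) = step178 (u ++ [b, c]) ++ step178 (b :: c :: v)
  | [] => rfl
  | [_] => rfl
  | [_, _] => rfl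
  | x :: y :: z :: u => by
    simp only [List.cons_append, step178]
    rw [← List.cons_append, ← List.cons_append, step178_append b c v (y :: z :: u)]
    rfl

theorem iter178_succ (n : ℕ) (z : List Bool) : iter178 (n + 1) z = iter178 n (step178 z) := rfl

theorem one_le_constPrefix_cons (b : Bool) (l : List Bool) : 1 ≤ constPrefix (b :: l) := by
  cases l with
  | nil => rfl
  | cons c l => simp only [constPrefix]; split <;> omega

theorem constPrefix_le_length : ∀ l : List Bool, constPrefix l ≤ l.length
  | [] | [_] => le_rfl
  | a :: b :: l => by
    have := constPrefix_le_length (b :: l)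
    simp only [constPrefix, List.length_cons] at *
    split <;> omega

theorem constPrefix_cons_cons_self (b : Bool) (l : List Bool) :
    constPrefix (b :: b :: l) = constPrefix (b :: l) + 1 := by
  simp [constPrefix]

theorem constPrefix_cons_cons_of_ne {b c : Bool} (l : List Bool) (h : b ≠ c) :
    constPrefix (b :: c :: l) = 1 := by
  simp [constPrefix, h]

/-- `y` and `y'` have the same length, the same leading run `bˡ`, and (when it exists) the same
letter right after it. -/
inductive SameLeadingRun : List Bool → List Bool → Prop
  | nil : SameLeadingRun [] []
  | single (b : Bool) : SameLeadingRun [b] [b]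
  | switch {b c : Bool} {l l' : List Bool} (hbc : b ≠ c) (hl : l.length = l'.length) :
      SameLeadingRun (b :: c :: l) (b :: c :: l')
  | stay (b : Bool) {l l' : List Bool} :
      SameLeadingRun (b :: l) (b :: l') → SameLeadingRun (b :: b :: l) (b :: b :: l')

namespace SameLeadingRun

theorem length_eq {y y' : List Bool} (h : SameLeadingRun y y') : y.length = y'.length := by
  induction h <;> simp_all

theorem head?_eq {y y' : List Bool} (h : SameLeadingRun y y') : y.head? = y'.head? := by
  cases h <;> rfl

theorem of_constPrefix_eq : ∀ {y y' : List Bool}, y.length = y'.length →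
    y.headD false = y'.headD false → constPrefix y = constPrefix y' → SameLeadingRun y y'
  | [], [], _, _, _ => nil
  | [b], [_], _, rfl, _ => single b
  | b :: c :: l, _ :: c' :: l', hl, rfl, hcp => by
    simp only [List.length_cons, Nat.add_right_cancel_iff] at hl
    by_cases hbc : b = c
    · subst hbc
      obtain rfl : b = c' := by
        by_contra hbc'
        rw [constPrefix_cons_cons_self, constPrefix_cons_cons_of_ne _ hbc'] at hcp
        have := one_le_constPrefix_cons b l
        omega
      rw [constPrefix_cons_cons_self, constPrefix_cons_cons_self] at hcp
      exact stay b (of_constPrefix_eq (by simpa using hl) rfl (by omega))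
    · have hbc' : b ≠ c' := by
        rintro rfl
        rw [constPrefix_cons_cons_self, constPrefix_cons_cons_of_ne _ hbc] at hcp
        have := one_le_constPrefix_cons b l'
        omega
      obtain rfl : c = c' := by revert hbc hbc'; cases b <;> cases c <;> cases c' <;> decide
      exact switch hbc (by simpa using hl)
  | [], _ :: _, hl, _, _ | _ :: _, [], hl, _, _ | [_], _ :: _ :: _, hl, _, _
  | _ :: _ :: _, [_], hl, _, _ => by simp at hl

theorem cons_cons {b : Bool} {l l' : List Bool} (h : SameLeadingRun (b :: l) (b :: l'))
    (a : Bool) : SameLeadingRun (a :: b :: l) (a :: b :: l') := by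
  by_cases hab : a = b
  · subst hab; exact stay a h
  · exact switch hab (by simpa using h.length_eq)

theorem cons {y y' : List Bool} (h : SameLeadingRun y y') (a : Bool) :
    SameLeadingRun (a :: y) (a :: y') := by
  cases h with
  | nil => exact single a
  | single b => exact (single b).cons_cons a
  | switch hbc hl => exact (switch hbc hl).cons_cons a
  | stay b h => exact (stay b h).cons_cons a

theorem step178_cons {y y' : List Bool} (h : SameLeadingRun y y') (a : Bool) :
    SameLeadingRun (step178 (a :: y)) (step178 (a :: y')) := by
  induction h generalizing a with
  | nil | single => exact nil
  | @switch b c l l' hbc hl =>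
    match l, l', hl with
    | [], [], _ => exact single _
    | d :: l, d' :: l', hl =>
      simp only [step178, rule178_of_ne_right a hbc, rule178_of_ne_left _ hbc]
      exact switch (Ne.symm hbc) (by simpa [step178_length] using hl)
  | stay b _ ih => exact (ih b).cons _

theorem iter178_append_eq : ∀ {n : ℕ} {x y y' : List Bool},
    SameLeadingRun y y' → x.length = n → y.length = n + 1 →
      iter178 n (x ++ y) = iter178 n (x ++ y')
  | 0, [], _, _, h, _, _ => by simp [iter178, List.headD_eq_head?_getD, h.head?_eq]
  | n + 1, x, b :: t, b' :: t', h, hx, hy => by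
    obtain rfl : b = b' := by simpa using h.head?_eq
    obtain rfl | ⟨x, a, rfl⟩ := List.eq_nil_or_concat' x
    · simp at hx
    simp only [List.append_assoc, List.singleton_append, iter178_succ]
    rw [step178_append a b t, step178_append a b t']
    exact iter178_append_eq (h.step178_cons a)
      (by simpa [step178_length] using hx) (by simpa [step178_length] using hy)
  | _ + 1, _, [], _, _, _, hy => by simp at hy
  | _, _, _ :: _, [], h, _, _ => by simpa using h.length_eq

end SameLeadingRun

theorem Set.ncard_image_le_ncard_image_of_factor {α β γ : Type*} {s : Set α} (f : α → β)
    (g : α → γ) (hfg : ∀ a ∈ s, ∀ a' ∈ s, g a = g a' → f a = f a') (hs : (g '' s).Finite) :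
    (f '' s).ncard ≤ (g '' s).ncard := by
  obtain rfl | ⟨a₀, -⟩ := s.eq_empty_or_nonempty
  · simp
  have : Nonempty α := ⟨a₀⟩
  have hsub : f '' s ⊆ (f ∘ Function.invFunOn g s) '' (g '' s) := by
    rintro _ ⟨a, ha, rfl⟩
    have hex : ∃ a' ∈ s, g a' = g a := ⟨a, ha, rfl⟩
    exact ⟨g a, mem_image_of_mem g ha,
      hfg _ (Function.invFunOn_mem hex) _ ha (Function.invFunOn_eq hex)⟩
  exact (ncard_le_ncard hsub (hs.image _)).trans (ncard_image_le hs)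

theorem iter178_append_eq_of_constPrefix_eq {n : ℕ} {x y y' : List Bool} (hx : x.length = n)
    (hy : y.length = n + 1) (hy' : y'.length = n + 1) (hhead : y.headD false = y'.headD false)
    (hrun : constPrefix y = constPrefix y') : iter178 n (x ++ y) = iter178 n (x ++ y') :=
  (SameLeadingRun.of_constPrefix_eq (hy.trans hy'.symm) hhead hrun).iter178_append_eq hx hy

theorem ncard_columns_iter178_le (n : ℕ) :
    Set.ncard { g : {x : List Bool // x.length = n} → Bool |
        ∃ y : List Bool, y.length = n + 1 ∧ g = fun x => iter178 n (x.1 ++ y) }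
      ≤ 2 * (n + 1) := by
  let words : Set (List Bool) := {y | y.length = n + 1}
  let column (y : List Bool) : {x : List Bool // x.length = n} → Bool :=
    fun x => iter178 n (x.1 ++ y)
  let runKey (y : List Bool) : Bool × ℕ := (y.headD false, constPrefix y)
  have hkeys : runKey '' words ⊆ (Finset.univ ×ˢ Finset.Icc 1 (n + 1) : Finset (Bool × ℕ)) := by
    rintro _ ⟨_ | ⟨b, y⟩, hy, rfl⟩
    · simp [words] at hy
    · have hlen : (b :: y).length = n + 1 := hy
      simpa [runKey, ← hlen] using
        ⟨one_le_constPrefix_cons b y, constPrefix_le_length (b :: y)⟩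
  calc _ = (column '' words).ncard := by
        congr 1; ext; simp [words, column, eq_comm]
    _ ≤ (runKey '' words).ncard :=
        Set.ncard_image_le_ncard_image_of_factor _ runKey
          (fun y hy y' hy' hkey => funext fun x => iter178_append_eq_of_constPrefix_eq x.2 hy hy'
            (congrArg Prod.fst hkey) (congrArg Prod.snd hkey))
          ((Finset.finite_toSet _).subset hkeys)
    _ ≤ 2 * (n + 1) := by simpa using Set.ncard_le_ncard hkeys

theorem rule178_column_structure_general (n : ℕ) :
    (∀ y ytilde : List Bool, y.length = n + 1 → ytilde.length = n + 1 →
      y.headD false = ytilde.headD false → constPrefix y = constPrefix ytilde →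
      ∀ x : List Bool, x.length = n → iter178 n (x ++ y) = iter178 n (x ++ ytilde)) ∧
    Set.ncard { g : {x : List Bool // x.length = n} → Bool |
        ∃ y : List Bool, y.length = n + 1 ∧ g = fun x => iter178 n (x.1 ++ y) }
      ≤ 2 * (n + 1) :=
  ⟨fun _ _ hy hy' hhead hrun _ hx => iter178_append_eq_of_constPrefix_eq hx hy hy' hhead hrun,
    ncard_columns_iter178_le n⟩

/-- For rule 178, the value of the `n`-th iterated local rule depends on Bob's input
`y ∈ {0,1}^{n+1}` only through the first bit of `y` and the length of the longest
constant prefix of `y`.  Consequently, the matrix `Mⁿ` of rule 178 (rows indexed by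
`x ∈ {0,1}^n`, columns by `y ∈ {0,1}^{n+1}`, entry `fⁿ(x·y)`) has at most `2(n+1)`
distinct columns. -/
theorem rule178_column_structure (n : ℕ) (hn : 1 ≤ n) :
    (∀ y ytilde : List Bool, y.length = n + 1 → ytilde.length = n + 1 →
      y.headD false = ytilde.headD false → constPrefix y = constPrefix ytilde →
      ∀ x : List Bool, x.length = n → iter178 n (x ++ y) = iter178 n (x ++ ytilde)) ∧
    Set.ncard { g : {x : List Bool // x.length = n} → Bool |
        ∃ y : List Bool, y.length = n + 1 ∧ g = fun x => iter178 n (x.1 ++ y) }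
      ≤ 2 * (n + 1) :=
  rule178_column_structure_general n
end
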